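/- Let u ⊆ {1,…,s} be nonempty and k ∈ {0,1,…,m−1}^{|u|}. Then the gain coefficient Γ_{u,k} is either 0 or equal to 2^{m − rank(C_{u,k})}. -/

import Mathlib

open Finset

noncomputable section

/-- The bit vector `i⃗ ∈ F₂^m` of the integer `i = Σ_{ℓ=1}^m i_ℓ 2^{ℓ-1}`. -/
def bvec (m : ℕ) (i : ℕ) : Fin m → ZMod 2 :=
  fun ℓ => if Nat.testBit i ℓ.1 then 1 else 0

/-- The `(r+1)`-st row (i.e. `r` with 0-indexing) of an `m × m` matrix over `F₂`,
as a vector in `F₂^m`; junk value `0` if `r ≥ m` (never used under the hypotheses below). -/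
def rowAt (m : ℕ) (A : Matrix (Fin m) (Fin m) (ZMod 2)) (r : ℕ) : Fin m → ZMod 2 :=
  fun ℓ => if h : r < m then A ⟨r, h⟩ ℓ else 0

/-- The stacked matrix `C_{u,k}`: for each `j ∈ u`, the first `k j` rows of `C j`. -/
def stack {m s : ℕ} (C : Fin s → Matrix (Fin m) (Fin m) (ZMod 2))
    (u : Finset (Fin s)) (k : Fin s → ℕ) :
    Matrix ((j : {x // x ∈ u}) × Fin (k j.1)) (Fin m) (ZMod 2) :=
  fun p => rowAt m (C p.1.1) p.2.1

/-- `∇C_{u,k}`: the matrix whose rows are the `(k j + 1)`-st rows (1-indexed) of `C j`, `j ∈ u`. -/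
def grad {m s : ℕ} (C : Fin s → Matrix (Fin m) (Fin m) (ZMod 2))
    (u : Finset (Fin s)) (k : Fin s → ℕ) :
    Matrix {x // x ∈ u} (Fin m) (ZMod 2) :=
  fun j => rowAt m (C j.1) (k j.1)

/-- The coordinate `x_{ij} ∈ [0,1)` of the digital net generated by `C₁,…,C_s`:
`x_{ij} = Σ_{ℓ=1}^m y_ℓ 2^{-ℓ}` where `y = C_j · i⃗` over `F₂`. -/
def pt {m s : ℕ} (C : Fin s → Matrix (Fin m) (Fin m) (ZMod 2)) (i : ℕ) (j : Fin s) : ℝ :=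
  ∑ ℓ : Fin m, (((C j).mulVec (bvec m i) ℓ).val : ℝ) / 2 ^ (ℓ.1 + 1)

/-- The factor `N`: with `M(x,x') = max{k ∈ ℕ₀ : ⌊2^k x⌋ = ⌊2^k x'⌋}` (the number of matching
leading binary digits), `Nf x x' c` equals `1` if `M(x,x') > c` (equivalently the first `c+1`
binary digits match), `-1` if `M(x,x') = c` (the first `c` digits match but not `c+1`), and
`0` if `M(x,x') < c`. -/
def Nf (x x' : ℝ) (c : ℕ) : ℤ :=
  if ⌊(2:ℝ) ^ (c + 1) * x⌋ = ⌊(2:ℝ) ^ (c + 1) * x'⌋ then 1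
  else if ⌊(2:ℝ) ^ c * x⌋ = ⌊(2:ℝ) ^ c * x'⌋ then -1
  else 0

/-- The gain coefficient `Γ_{u,k} = 2^{-m} Σ_{i=0}^{2^m-1} Σ_{i'=0}^{2^m-1} ∏_{j∈u} N_{i,i',j}`. -/
def Gam {m s : ℕ} (C : Fin s → Matrix (Fin m) (Fin m) (ZMod 2))
    (u : Finset (Fin s)) (k : Fin s → ℕ) : ℚ :=
  (2 ^ m : ℚ)⁻¹ * ∑ i ∈ Finset.range (2 ^ m), ∑ i' ∈ Finset.range (2 ^ m),
      ∏ j ∈ u, (Nf (pt C i j) (pt C i' j) (k j) : ℚ)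

/-! Two net points agree in their first `c` digits of coordinate `j` exactly when the first `c`
digits of `C_j (i⃗ - i⃗')` vanish. Hence the product of the factors `N` depends only on
`d = i⃗ - i⃗'`: it is zero unless `d ∈ ker C_{u,k}`, and on that kernel it is the additive character
`d ↦ ∏_{j ∈ u} (-1)^{(C_j d)_{k_j + 1}}`. So `Γ_{u,k}` is a character sum over `ker C_{u,k}`, which is
either `0` or `|ker C_{u,k}| = 2^{m - rank C_{u,k}}`. -/

open Matrix

section BinaryExpansion

lemma binary_prefix_eq_iff {b b' : ℕ → ℕ} (hb : ∀ ℓ, b ℓ ≤ 1) (hb' : ∀ ℓ, b' ℓ ≤ 1) (c : ℕ) :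
    ∑ ℓ ∈ range c, b ℓ * 2 ^ (c - 1 - ℓ) = ∑ ℓ ∈ range c, b' ℓ * 2 ^ (c - 1 - ℓ) ↔
      ∀ ℓ < c, b ℓ = b' ℓ := by
  have horner (b : ℕ → ℕ) (c : ℕ) : ∑ ℓ ∈ range (c + 1), b ℓ * 2 ^ (c + 1 - 1 - ℓ) =
      2 * ∑ ℓ ∈ range c, b ℓ * 2 ^ (c - 1 - ℓ) + b c := by
    rw [sum_range_succ, mul_sum, Nat.add_sub_cancel, Nat.sub_self, pow_zero, mul_one]
    congr 1
    refine sum_congr rfl fun ℓ hℓ => ?_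
    rw [show c - ℓ = c - 1 - ℓ + 1 by have := mem_range.mp hℓ; omega, pow_succ]
    ring
  induction c with
  | zero => simp
  | succ c ih =>
    rw [horner, horner, Nat.forall_lt_succ_right]
    have := hb c
    have := hb' c
    constructor
    · intro h
      exact ⟨ih.mp (by omega), by omega⟩
    · rintro ⟨hprefix, hlast⟩
      rw [ih.mpr hprefix, hlast]

lemma sum_Ico_binary_lt {b : ℕ → ℕ} (hb : ∀ ℓ, b ℓ ≤ 1) {c N : ℕ} (hcN : c ≤ N) :
    ∑ ℓ ∈ Ico c N, (b ℓ : ℝ) / 2 ^ (ℓ + 1) < (1 / 2) ^ c :=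
  calc ∑ ℓ ∈ Ico c N, (b ℓ : ℝ) / 2 ^ (ℓ + 1)
      ≤ ∑ ℓ ∈ Ico c N, (1 / 2 : ℝ) ^ ℓ / 2 := by
        refine sum_le_sum fun ℓ _ => ?_
        rw [div_pow, one_pow, div_div, ← pow_succ]
        gcongr
        exact_mod_cast hb ℓ
    _ = (1 / 2) ^ c - (1 / 2) ^ N := by
        rw [← sum_div, geom_sum_Ico (by norm_num) hcN]
        ring
    _ < (1 / 2) ^ c := by
        have : (0 : ℝ) < (1 / 2) ^ N := by positivity
        linarith

lemma floor_two_pow_mul_binary {b : ℕ → ℕ} (hb : ∀ ℓ, b ℓ ≤ 1) {c N : ℕ} (hcN : c ≤ N) :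
    ⌊(2 : ℝ) ^ c * ∑ ℓ ∈ range N, (b ℓ : ℝ) / 2 ^ (ℓ + 1)⌋ =
      ((∑ ℓ ∈ range c, b ℓ * 2 ^ (c - 1 - ℓ) : ℕ) : ℤ) := by
  have head : (2 : ℝ) ^ c * ∑ ℓ ∈ range c, (b ℓ : ℝ) / 2 ^ (ℓ + 1) =
      ∑ ℓ ∈ range c, (b ℓ : ℝ) * 2 ^ (c - 1 - ℓ) := by
    rw [mul_sum]
    refine sum_congr rfl fun ℓ hℓ => ?_
    have hsplit : (2 : ℝ) ^ c = 2 ^ (c - 1 - ℓ) * 2 ^ (ℓ + 1) := by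
      rw [← pow_add]
      congr 1
      have := mem_range.mp hℓ
      omega
    rw [hsplit, mul_comm (b ℓ : ℝ)]
    field_simp
  have tail_lt_one : (2 : ℝ) ^ c * ∑ ℓ ∈ Ico c N, (b ℓ : ℝ) / 2 ^ (ℓ + 1) < 1 :=
    calc _ < (2 : ℝ) ^ c * (1 / 2) ^ c := by gcongr; exact sum_Ico_binary_lt hb hcN
      _ = 1 := by rw [← mul_pow]; norm_num
  rw [← sum_range_add_sum_Ico _ hcN, mul_add, head, Int.floor_eq_iff]
  push_cast
  exact ⟨le_add_of_nonneg_right (by positivity), by linarith⟩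

end BinaryExpansion

section Digits

variable {m : ℕ}

def digit (r : ℕ) : (Fin m → ZMod 2) →ₗ[ZMod 2] ZMod 2 :=
  if h : r < m then LinearMap.proj ⟨r, h⟩ else 0

lemma digit_apply (r : ℕ) (y : Fin m → ZMod 2) :
    digit r y = if h : r < m then y ⟨r, h⟩ else 0 := by
  unfold digit
  split_ifs <;> rfl

lemma digit_val_le_one (r : ℕ) (y : Fin m → ZMod 2) : (digit r y).val ≤ 1 :=
  Nat.le_of_lt_succ (ZMod.val_lt _)

lemma rowAt_dotProduct (A : Matrix (Fin m) (Fin m) (ZMod 2)) (r : ℕ) (d : Fin m → ZMod 2) :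
    rowAt m A r ⬝ᵥ d = digit r (A *ᵥ d) := by
  by_cases h : r < m <;> simp [digit_apply, rowAt, dotProduct, mulVec, h]

def binaryValue (y : Fin m → ZMod 2) : ℝ :=
  ∑ ℓ : Fin m, ((y ℓ).val : ℝ) / 2 ^ (ℓ.1 + 1)

lemma binaryValue_eq_sum_range (y : Fin m → ZMod 2) {N : ℕ} (hN : m ≤ N) :
    binaryValue y = ∑ ℓ ∈ range N, ((digit ℓ y).val : ℝ) / 2 ^ (ℓ + 1) := by
  have hdigits : binaryValue y = ∑ ℓ : Fin m, ((digit ℓ y).val : ℝ) / 2 ^ (ℓ.1 + 1) :=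
    sum_congr rfl fun ℓ _ => by rw [digit_apply, dif_pos ℓ.isLt]
  rw [hdigits, Fin.sum_univ_eq_sum_range (fun ℓ => ((digit ℓ y).val : ℝ) / 2 ^ (ℓ + 1))]
  refine sum_subset (range_subset_range.mpr hN) fun ℓ _ hℓ => ?_
  rw [digit_apply, dif_neg (by simpa using hℓ)]
  simp

lemma floor_two_pow_mul_binaryValue_eq_iff (y y' : Fin m → ZMod 2) (c : ℕ) :
    ⌊(2 : ℝ) ^ c * binaryValue y⌋ = ⌊(2 : ℝ) ^ c * binaryValue y'⌋ ↔
      ∀ r < c, digit r (y - y') = 0 := by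
  rw [binaryValue_eq_sum_range y (le_add_self : m ≤ c + m),
    binaryValue_eq_sum_range y' (le_add_self : m ≤ c + m),
    floor_two_pow_mul_binary (digit_val_le_one · y) le_self_add,
    floor_two_pow_mul_binary (digit_val_le_one · y') le_self_add, Nat.cast_inj,
    binary_prefix_eq_iff (digit_val_le_one · y) (digit_val_le_one · y')]
  simp only [map_sub, sub_eq_zero, ZMod.val_injective _ |>.eq_iff]

end Digits

def signChar : AddChar (ZMod 2) ℚ :=
  AddChar.zmodChar 2 (by norm_num : (-1 : ℚ) ^ 2 = 1)

lemma signChar_of_ne_zero {a : ZMod 2} (ha : a ≠ 0) : signChar a = -1 := by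
  obtain rfl : a = 1 := by revert a; decide
  rw [signChar, AddChar.zmodChar_apply, ZMod.val_one, pow_one]

lemma Nf_binaryValue {m : ℕ} (y y' : Fin m → ZMod 2) (c : ℕ) :
    (Nf (binaryValue y) (binaryValue y') c : ℚ) =
      if ∀ r < c, digit r (y - y') = 0 then signChar (digit c (y - y')) else 0 := by
  simp only [Nf, floor_two_pow_mul_binaryValue_eq_iff, Nat.forall_lt_succ_right]
  by_cases hprefix : ∀ r < c, digit r (y - y') = 0
  · by_cases hc : digit c (y - y') = 0
    · rw [if_pos ⟨hprefix, hc⟩, if_pos hprefix, hc, AddChar.map_zero_eq_one, Int.cast_one]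
    · rw [if_neg (hc ·.2), if_pos hprefix, if_pos hprefix, signChar_of_ne_zero hc, Int.cast_neg,
        Int.cast_one]
  · rw [if_neg (hprefix ·.1), if_neg hprefix, if_neg hprefix, Int.cast_zero]

lemma card_ker_mulVecLin {K ι n : Type*} [Field K] [Fintype n] (A : Matrix ι n K) :
    Nat.card (LinearMap.ker A.mulVecLin) = Nat.card K ^ (Fintype.card n - A.rank) := by
  have hrank := LinearMap.finrank_range_add_finrank_ker A.mulVecLin
  rw [Module.finrank_fintype_fun_eq_card] at hrank
  rw [Module.natCard_eq_pow_finrank (K := K), Matrix.rank]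
  congr 1
  omega

lemma bvec_eq_finFunctionFinEquiv_symm {m : ℕ} (i : Fin (2 ^ m)) :
    bvec m i = finFunctionFinEquiv.symm i := by
  funext ℓ
  apply Fin.ext
  rw [finFunctionFinEquiv_symm_apply_val, bvec, Nat.testBit_eq_decide_div_mod_eq]
  rcases Nat.mod_two_eq_zero_or_one (i / 2 ^ ℓ.1) with h | h <;> simp [h] <;> rfl

lemma sum_range_two_pow_bvec {m : ℕ} (H : (Fin m → ZMod 2) → ℚ) :
    ∑ i ∈ range (2 ^ m), H (bvec m i) = ∑ d, H d := by
  rw [← Fin.sum_univ_eq_sum_range (fun i => H (bvec m i))]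
  simp_rw [bvec_eq_finFunctionFinEquiv_symm]
  exact finFunctionFinEquiv.symm.sum_comp H

section DigitalNet

variable {m s : ℕ} (C : Fin s → Matrix (Fin m) (Fin m) (ZMod 2)) (u : Finset (Fin s)) (k : Fin s → ℕ)

lemma pt_eq_binaryValue (i : ℕ) (j : Fin s) : pt C i j = binaryValue (C j *ᵥ bvec m i) := rfl

lemma stack_mulVec_eq_zero_iff (d : Fin m → ZMod 2) :
    stack C u k *ᵥ d = 0 ↔ ∀ j ∈ u, ∀ r < k j, digit r (C j *ᵥ d) = 0 := by
  simp only [funext_iff, Pi.zero_apply, Sigma.forall, Subtype.forall, Fin.forall_iff]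
  exact forall₂_congr fun j _ => forall₂_congr fun r _ => by
    rw [← rowAt_dotProduct]
    rfl

def gradChar : AddChar (Fin m → ZMod 2) ℚ :=
  ∏ j ∈ u, signChar.compAddMonoidHom ((digit (k j)).comp (C j).mulVecLin).toAddMonoidHom

lemma gradChar_apply (d : Fin m → ZMod 2) :
    gradChar C u k d = ∏ j ∈ u, signChar (digit (k j) (C j *ᵥ d)) := by
  simp [gradChar, AddChar.prod_apply]

lemma prod_Nf_pt (i i' : ℕ) :
    ∏ j ∈ u, (Nf (pt C i j) (pt C i' j) (k j) : ℚ) =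
      if stack C u k *ᵥ (bvec m i - bvec m i') = 0
      then gradChar C u k (bvec m i - bvec m i') else 0 := by
  simp only [pt_eq_binaryValue, Nf_binaryValue, ← mulVec_sub, prod_ite_zero,
    stack_mulVec_eq_zero_iff, gradChar_apply]
  congr

open Classical in
lemma Gam_eq_sum_ker :
    Gam C u k = ∑ d : LinearMap.ker (stack C u k).mulVecLin, gradChar C u k d := by
  set F : (Fin m → ZMod 2) → ℚ := fun d => if stack C u k *ᵥ d = 0 then gradChar C u k d else 0
  have hinner (i : ℕ) :
      ∑ i' ∈ range (2 ^ m), ∏ j ∈ u, (Nf (pt C i j) (pt C i' j) (k j) : ℚ) = ∑ d, F d := by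
    simp_rw [prod_Nf_pt]
    rw [sum_range_two_pow_bvec (fun d' => F (bvec m i - d'))]
    exact Fintype.sum_equiv (Equiv.subLeft (bvec m i)) _ _ fun _ => rfl
  rw [Gam, sum_congr rfl fun i _ => hinner i, sum_const, card_range, nsmul_eq_mul, Nat.cast_pow,
    Nat.cast_ofNat, inv_mul_cancel_left₀ (by positivity), ← sum_filter]
  exact sum_subtype _ (by simp [LinearMap.mem_ker]) _

end DigitalNet

theorem statement_general (m s : ℕ)
    (C : Fin s → Matrix (Fin m) (Fin m) (ZMod 2))
    (u : Finset (Fin s))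
    (k : Fin s → ℕ) :
    Gam C u k = 0 ∨ Gam C u k = (2 : ℚ) ^ (m - (stack C u k).rank) := by
  classical
  set ψ := (gradChar C u k).compAddMonoidHom
    (LinearMap.ker (stack C u k).mulVecLin).subtype.toAddMonoidHom
  have hGam : Gam C u k = ∑ d, ψ d := Gam_eq_sum_ker C u k
  rw [hGam, AddChar.sum_eq_ite]
  split_ifs
  · right
    rw [← Nat.card_eq_fintype_card, card_ker_mulVecLin, Nat.card_zmod, Fintype.card_fin]
    norm_num
  · exact .inl rfl

theorem statement (m s : ℕ) (hm : 1 ≤ m) (hs : 1 ≤ s)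
    (C : Fin s → Matrix (Fin m) (Fin m) (ZMod 2))
    (u : Finset (Fin s)) (hu : u.Nonempty)
    (k : Fin s → ℕ) (hk : ∀ j ∈ u, k j ≤ m - 1) :
    Gam C u k = 0 ∨ Gam C u k = (2 : ℚ) ^ (m - (stack C u k).rank) :=
  statement_general m s C u k
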